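/- Probability of the active state: for all real a, b with 0 < a < b, all real ν > 0 and θ with 0 < θ ≤ 1, the family (P_{1,n})_{n∈ℕ} is summable and p₁ := ∑_{n=0}^∞ P_{1,n} = (a/(Cb))·M(a+1, b+1, ν(1−θ)), where C = M(a, b, ν(1−θ)). -/

import Mathlib

open scoped BigOperators
set_option maxHeartbeats 1000000

/-- Pochhammer symbol `(a)ₙ = a(a+1)⋯(a+n−1)`, `(a)₀ = 1`. -/
noncomputable def poch (a : ℝ) (n : ℕ) : ℝ := ∏ k ∈ Finset.range n, (a + k)

/-- Kummer's confluent hypergeometric function `M(a,b,z)`. -/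
noncomputable def kummerM (a b z : ℝ) : ℝ :=
  ∑' k : ℕ, poch a k / poch b k * z ^ k / (Nat.factorial k : ℝ)

/-- Steady-state probability `P_{0,n}` of the binary gene model. -/
noncomputable def P0 (a b ν θ : ℝ) (n : ℕ) : ℝ :=
  (b - a) / (kummerM a b (ν * (1 - θ)) * b) * (ν ^ n / (Nat.factorial n : ℝ)) *
    (poch a n / poch (1 + b) n) * kummerM (a + n) (1 + b + n) (-(ν * θ))

/-- Steady-state probability `P_{1,n}` of the binary gene model. -/
noncomputable def P1 (a b ν θ : ℝ) (n : ℕ) : ℝ :=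
  a / (kummerM a b (ν * (1 - θ)) * b) * (ν ^ n / (Nat.factorial n : ℝ)) *
    (poch (1 + a) n / poch (1 + b) n) * kummerM (1 + a + n) (1 + b + n) (-(ν * θ))

lemma poch_pos {x : ℝ} (hx : 0 < x) (n : ℕ) : 0 < poch x n :=
  Finset.prod_pos fun k _ => by positivity

lemma poch_mono {x y : ℝ} (hx : 0 < x) (hxy : x ≤ y) (n : ℕ) : poch x n ≤ poch y n :=
  Finset.prod_le_prod (fun k _ => by positivity) (fun k _ => by linarith)

lemma poch_add (a : ℝ) (n k : ℕ) : poch a (n + k) = poch a n * poch (a + n) k := by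
  unfold poch
  rw [Finset.prod_range_add]
  congr 1
  refine Finset.prod_congr rfl fun i _ => ?_
  push_cast; ring

/-- Probability of the active state. -/
theorem prob_active_state (a b ν θ : ℝ) (ha : 0 < a) (hab : a < b)
    (hν : 0 < ν) (hθ0 : 0 < θ) (hθ1 : θ ≤ 1) :
    Summable (fun n : ℕ => P1 a b ν θ n) ∧
    (∑' n : ℕ, P1 a b ν θ n) =
      a / (kummerM a b (ν * (1 - θ)) * b) *
        kummerM (a + 1) (b + 1) (ν * (1 - θ)) := by
  have hb1 : (0:ℝ) < 1 + a := by linarith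
  have hb2 : (0:ℝ) < 1 + b := by linarith
  set c : ℝ := a / (kummerM a b (ν * (1 - θ)) * b) with hc
  set f : ℕ × ℕ → ℝ := fun p =>
    poch (1+a) (p.1+p.2) / poch (1+b) (p.1+p.2) *
      (ν ^ p.1 * (-(ν*θ)) ^ p.2) / ((p.1.factorial : ℝ) * (p.2.factorial : ℝ)) with hfdef
  -- ratio bounds
  have hrpos : ∀ m : ℕ, 0 < poch (1+a) m / poch (1+b) m :=
    fun m => div_pos (poch_pos hb1 m) (poch_pos hb2 m)
  have hrle : ∀ m : ℕ, poch (1+a) m / poch (1+b) m ≤ 1 := fun m =>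
    (div_le_one (poch_pos hb2 m)).mpr (poch_mono hb1 (by linarith) m)
  -- bound for |f|
  have hbound : ∀ p : ℕ × ℕ, ‖f p‖ ≤ (ν ^ p.1 / (p.1.factorial : ℝ)) *
      ((ν*θ) ^ p.2 / (p.2.factorial : ℝ)) := by
    rintro ⟨n, k⟩
    have h1 : (0:ℝ) < (n.factorial : ℝ) := by positivity
    have h2 : (0:ℝ) < (k.factorial : ℝ) := by positivity
    have : ‖f (n, k)‖ = poch (1+a) (n+k) / poch (1+b) (n+k) *
        (ν ^ n * (ν*θ) ^ k) / ((n.factorial : ℝ) * (k.factorial : ℝ)) := by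
      simp only [hfdef]
      rw [Real.norm_eq_abs, abs_div, abs_mul, abs_of_pos (hrpos _), abs_mul,
        abs_of_pos (by positivity : (0:ℝ) < ν ^ n), abs_of_pos (by positivity : (0:ℝ) < (n.factorial : ℝ) * (k.factorial : ℝ)),
        abs_pow, abs_neg, abs_of_pos (by positivity : (0:ℝ) < ν * θ)]
    rw [this]
    have hθν : (0:ℝ) < ν * θ := by positivity
    calc poch (1+a) (n+k) / poch (1+b) (n+k) * (ν ^ n * (ν*θ) ^ k) /
          ((n.factorial : ℝ) * (k.factorial : ℝ))
        ≤ 1 * (ν ^ n * (ν*θ) ^ k) / ((n.factorial : ℝ) * (k.factorial : ℝ)) := by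
          gcongr
          exact hrle _
      _ = (ν ^ n / (n.factorial : ℝ)) * ((ν*θ) ^ k / (k.factorial : ℝ)) := by ring
  -- summability of the dominating series
  have hgsum : Summable (fun p : ℕ × ℕ => (ν ^ p.1 / (p.1.factorial : ℝ)) *
      ((ν*θ) ^ p.2 / (p.2.factorial : ℝ))) := by
    apply summable_mul_of_summable_norm (f := fun n : ℕ => ν ^ n / (n.factorial : ℝ))
      (g := fun k : ℕ => (ν*θ) ^ k / (k.factorial : ℝ))
    · exact (Real.summable_pow_div_factorial ν).abs
    · exact (Real.summable_pow_div_factorial (ν*θ)).abs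
  have hf : Summable f := Summable.of_norm_bounded hgsum hbound

  -- slice sums: P1 n = c * ∑' k, f (n,k)
  have hslice : ∀ n : ℕ, ∑' k : ℕ, f (n, k) =
      (ν ^ n / (n.factorial : ℝ)) * (poch (1+a) n / poch (1+b) n) *
        kummerM (1+a+n) (1+b+n) (-(ν*θ)) := by
    intro n
    rw [kummerM, ← tsum_mul_left]
    congr 1
    ext k
    simp only [hfdef]
    rw [poch_add (1+a) n k, poch_add (1+b) n k]
    have h1 : (0:ℝ) < (n.factorial : ℝ) := by positivity
    have h2 : (0:ℝ) < (k.factorial : ℝ) := by positivity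
    have h3 := poch_pos hb2 n
    have h4 := poch_pos (by positivity : (0:ℝ) < 1 + b + n) k
    field_simp
  have hP1 : ∀ n : ℕ, P1 a b ν θ n = c * ∑' k : ℕ, f (n, k) := by
    intro n
    rw [hslice n, P1, ← hc]
    ring
  -- summability of the slice sums
  have hE : Summable (fun k : ℕ => (ν*θ) ^ k / (k.factorial : ℝ)) :=
    Real.summable_pow_div_factorial (ν*θ)
  set E : ℝ := ∑' k : ℕ, (ν*θ) ^ k / (k.factorial : ℝ) with hEdef
  have hslice_norm : ∀ n : ℕ, Summable (fun k : ℕ => ‖f (n, k)‖) := by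
    intro n
    exact Summable.of_nonneg_of_le (fun k => norm_nonneg _) (fun k => hbound (n, k))
      (hE.mul_left (ν ^ n / (n.factorial : ℝ)))
  have hslice_bd : ∀ n : ℕ, ‖∑' k : ℕ, f (n, k)‖ ≤ (ν ^ n / (n.factorial : ℝ)) * E := by
    intro n
    calc ‖∑' k : ℕ, f (n, k)‖ ≤ ∑' k : ℕ, ‖f (n, k)‖ := norm_tsum_le_tsum_norm (hslice_norm n)
      _ ≤ ∑' k : ℕ, (ν ^ n / (n.factorial : ℝ)) * ((ν*θ) ^ k / (k.factorial : ℝ)) :=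
          Summable.tsum_le_tsum (fun k => hbound (n, k)) (hslice_norm n) (hE.mul_left _)
      _ = (ν ^ n / (n.factorial : ℝ)) * E := tsum_mul_left
  have hSsum : Summable (fun n : ℕ => ∑' k : ℕ, f (n, k)) := by
    apply Summable.of_norm_bounded ((Real.summable_pow_div_factorial ν).mul_right E) hslice_bd
  have hP1sum : Summable (fun n : ℕ => P1 a b ν θ n) := by
    simpa only [hP1] using hSsum.mul_left c
  refine ⟨hP1sum, ?_⟩
  -- diagonal sums
  have hdiag : ∀ m : ℕ, ∑ p ∈ Finset.HasAntidiagonal.antidiagonal m, f p =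
      poch (1+a) m / poch (1+b) m * (ν * (1-θ)) ^ m / (m.factorial : ℝ) := by
    intro m
    rw [Finset.Nat.sum_antidiagonal_eq_sum_range_succ_mk]
    have key : (ν * (1-θ)) ^ m = ∑ k ∈ Finset.range (m+1),
        ν ^ k * (-(ν*θ)) ^ (m-k) * (m.choose k : ℝ) := by
      rw [show ν * (1-θ) = ν + (-(ν*θ)) by ring, add_pow]
    rw [key, Finset.mul_sum, Finset.sum_div]
    refine Finset.sum_congr rfl fun k hk => ?_
    have hkm : k ≤ m := Nat.lt_succ_iff.mp (Finset.mem_range.mp hk)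
    simp only [hfdef]
    rw [Nat.add_sub_cancel' hkm]
    rw [Nat.cast_choose ℝ hkm]
    have h1 : (0:ℝ) < (k.factorial : ℝ) := by positivity
    have h2 : (0:ℝ) < ((m-k).factorial : ℝ) := by positivity
    have h3 : (0:ℝ) < (m.factorial : ℝ) := by positivity
    field_simp
  -- assemble
  have hfe : Summable (fun σ : Σ m : ℕ, Finset.HasAntidiagonal.antidiagonal m =>
      f (Finset.HasAntidiagonal.sigmaAntidiagonalEquivProd σ)) :=
    (Finset.HasAntidiagonal.sigmaAntidiagonalEquivProd (A := ℕ)).summable_iff.mpr hf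
  have step1 : ∑' p : ℕ × ℕ, f p = ∑' m : ℕ, ∑ p ∈ Finset.HasAntidiagonal.antidiagonal m, f p := by
    rw [← (Finset.HasAntidiagonal.sigmaAntidiagonalEquivProd (A := ℕ)).tsum_eq f,
      Summable.tsum_sigma' (fun m => (hasSum_fintype _).summable) hfe]
    refine tsum_congr fun m => ?_
    rw [tsum_fintype]
    exact Finset.sum_coe_sort (Finset.HasAntidiagonal.antidiagonal m) f
  calc ∑' n : ℕ, P1 a b ν θ n = ∑' n : ℕ, c * ∑' k : ℕ, f (n, k) := tsum_congr hP1
    _ = c * ∑' n : ℕ, ∑' k : ℕ, f (n, k) := tsum_mul_left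
    _ = c * ∑' p : ℕ × ℕ, f p := by
        rw [Summable.tsum_prod' hf (fun n => (hslice_norm n).of_norm)]
    _ = c * ∑' m : ℕ, ∑ p ∈ Finset.HasAntidiagonal.antidiagonal m, f p := by rw [step1]
    _ = c * kummerM (a+1) (b+1) (ν * (1-θ)) := by
        rw [kummerM]
        congr 1
        refine tsum_congr fun m => ?_
        rw [hdiag m, show a + 1 = 1 + a by ring, show b + 1 = 1 + b by ring]
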